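/- arXiv:2401.16962 — 4 statements merged into one kernel-verified Lean document; each statement's English description precedes it below -/
import Mathlib

section
/- Let H be a Hilbert space and (v_i)_{i∈I} a family of vectors indexed by a countable set I such that ⟨v_i, v_j⟩ ≥ 0 for all i, j ∈ I (the family lies in a positive cone). Then the net F ↦ ∑_{i∈F} v_i, indexed by finite subsets F ⊆ I ordered by inclusion, converges in H if and only if the net of norms (‖∑_{i∈F} v_i‖)_F is bounded. -/
open scoped RealInnerProductSpace

/-- For a family of vectors in a Hilbert space with pairwise nonnegative
inner products, the net of finite partial sums converges iff the net of norms of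
finite partial sums is bounded. -/
theorem summable_iff_bddNorms_of_nonneg_inner
    {I : Type*} [Countable I] {H : Type*} [NormedAddCommGroup H]
    [InnerProductSpace ℝ H] [CompleteSpace H]
    (v : I → H) (hpos : ∀ i j : I, 0 ≤ ⟪v i, v j⟫) :
    Summable v ↔ ∃ C : ℝ, ∀ F : Finset I, ‖∑ i ∈ F, v i‖ ≤ C := by
  classical
  have key : ∀ F G : Finset I, Disjoint F G →
      ‖∑ i ∈ F, v i‖ ^ 2 + ‖∑ i ∈ G, v i‖ ^ 2 ≤ ‖∑ i ∈ F ∪ G, v i‖ ^ 2 := by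
    intro F G hFG
    rw [Finset.sum_union hFG, norm_add_sq_real]
    have hin : 0 ≤ ⟪∑ i ∈ F, v i, ∑ i ∈ G, v i⟫ := by
      rw [sum_inner]
      refine Finset.sum_nonneg fun i _ => ?_
      rw [inner_sum]
      exact Finset.sum_nonneg fun j _ => hpos i j
    linarith
  have mono : ∀ F G : Finset I, F ⊆ G →
      ‖∑ i ∈ F, v i‖ ≤ ‖∑ i ∈ G, v i‖ := by
    intro F G hFG
    have hd : Disjoint F (G \ F) := Finset.disjoint_sdiff
    have := key F (G \ F) hd
    rw [Finset.union_sdiff_of_subset hFG] at this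
    nlinarith [norm_nonneg (∑ i ∈ F, v i), norm_nonneg (∑ i ∈ G, v i),
      sq_nonneg ‖∑ i ∈ G \ F, v i‖]
  constructor
  · rintro ⟨a, ha⟩
    have h1 : ∀ᶠ F in Filter.atTop, ‖∑ i ∈ F, v i‖ ≤ ‖a‖ + 1 := by
      have : Filter.Tendsto (fun F : Finset I => ‖∑ i ∈ F, v i‖)
          Filter.atTop (nhds ‖a‖) := (continuous_norm.tendsto a).comp ha
      have := this.eventually_le_const (by linarith : ‖a‖ < ‖a‖ + 1)
      exact this
    obtain ⟨F0, hF0⟩ := Filter.eventually_atTop.mp h1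
    refine ⟨‖a‖ + 1, fun F => ?_⟩
    calc ‖∑ i ∈ F, v i‖ ≤ ‖∑ i ∈ F ∪ F0, v i‖ := mono _ _ Finset.subset_union_left
      _ ≤ ‖a‖ + 1 := hF0 _ Finset.subset_union_right
  · rintro ⟨C, hC⟩
    rw [summable_iff_vanishing]
    intro e he
    obtain ⟨ε, hε, hball⟩ := Metric.mem_nhds_iff.mp he
    set S : Set ℝ := Set.range (fun F : Finset I => ‖∑ i ∈ F, v i‖ ^ 2) with hS
    have hCnn : 0 ≤ C := le_trans (norm_nonneg _) (hC ∅)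
    have hbdd : BddAbove S := by
      refine ⟨C ^ 2, ?_⟩
      rintro x ⟨F, rfl⟩
      exact pow_le_pow_left₀ (norm_nonneg _) (hC F) 2
    have hne : S.Nonempty := ⟨_, ⟨∅, rfl⟩⟩
    set s := sSup S with hs
    have hlt : s - ε ^ 2 < s := by nlinarith
    obtain ⟨x, ⟨F0, rfl⟩, hx⟩ := exists_lt_of_lt_csSup hne hlt
    refine ⟨F0, fun t ht => hball ?_⟩
    have h1 := key F0 t ht.symm
    have h2 : ‖∑ i ∈ F0 ∪ t, v i‖ ^ 2 ≤ s := le_csSup hbdd ⟨F0 ∪ t, rfl⟩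
    have hx' : s - ε ^ 2 < ‖∑ i ∈ F0, v i‖ ^ 2 := hx
    have h3 : ‖∑ i ∈ t, v i‖ ^ 2 < ε ^ 2 := by linarith
    have h4 : ‖∑ i ∈ t, v i‖ < ε := by nlinarith [norm_nonneg (∑ i ∈ t, v i)]
    simpa [Metric.mem_ball] using h4
end

section
/- Let H be a Hilbert space and (v_i)_{i∈I} a summable family of vectors with ⟨v_i, v_j⟩ ≥ 0 for all i, j ∈ I. Let u = (u_i) and u' = (u'_i) be bounded families of nonnegative reals with u_i ≤ u'_i for all i. Then the families (u_i v_i) and (u'_i v_i) are summable and ‖∑_i u_i v_i‖ ≤ ‖∑_i u'_i v_i‖ ≤ ‖u'‖_∞ · ‖∑_i v_i‖. -/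
open scoped RealInnerProductSpace

lemma finset_wsum_norm_le {I : Type*} {H : Type*} [NormedAddCommGroup H]
    [InnerProductSpace ℝ H]
    (v : I → H) (hpos : ∀ i j : I, 0 ≤ ⟪v i, v j⟫)
    (w w' : I → ℝ) (hw : ∀ i, 0 ≤ w i) (hle : ∀ i, w i ≤ w' i)
    (s : Finset I) :
    ‖∑ i ∈ s, w i • v i‖ ≤ ‖∑ i ∈ s, w' i • v i‖ := by
  have key : ∀ (a : I → ℝ), ⟪∑ i ∈ s, a i • v i, ∑ j ∈ s, a j • v j⟫
      = ∑ i ∈ s, ∑ j ∈ s, a i * a j * ⟪v i, v j⟫ := by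
    intro a
    rw [sum_inner]
    refine Finset.sum_congr rfl fun i _ => ?_
    rw [inner_sum]
    refine Finset.sum_congr rfl fun j _ => ?_
    rw [real_inner_smul_left, real_inner_smul_right]; ring
  have h2 : ⟪∑ i ∈ s, w i • v i, ∑ j ∈ s, w j • v j⟫
      ≤ ⟪∑ i ∈ s, w' i • v i, ∑ j ∈ s, w' j • v j⟫ := by
    rw [key, key]
    refine Finset.sum_le_sum fun i _ => Finset.sum_le_sum fun j _ => ?_
    have hww : w i * w j ≤ w' i * w' j :=
      mul_le_mul (hle i) (hle j) (hw j) ((hw i).trans (hle i))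
    exact mul_le_mul_of_nonneg_right hww (hpos i j)
  rw [real_inner_self_eq_norm_sq, real_inner_self_eq_norm_sq] at h2
  have := Real.sqrt_le_sqrt h2
  rwa [Real.sqrt_sq (norm_nonneg _), Real.sqrt_sq (norm_nonneg _)] at this

/-- Weighted sums of a summable family with pairwise nonnegative inner
products, with pointwise ordered bounded nonnegative weights. -/
theorem weighted_sums_of_nonneg_inner
    {I : Type*} [Countable I] {H : Type*} [NormedAddCommGroup H]
    [InnerProductSpace ℝ H] [CompleteSpace H]
    (v : I → H) (hpos : ∀ i j : I, 0 ≤ ⟪v i, v j⟫) (hsum : Summable v)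
    (u u' : I → ℝ) (hu : ∀ i, 0 ≤ u i) (hle : ∀ i, u i ≤ u' i)
    (C : ℝ) (hC : ∀ i, u' i ≤ C) :
    Summable (fun i => u i • v i) ∧ Summable (fun i => u' i • v i) ∧
      ‖∑' i, u i • v i‖ ≤ ‖∑' i, u' i • v i‖ ∧
      ‖∑' i, u' i • v i‖ ≤ C * ‖∑' i, v i‖ := by
  set C' : ℝ := max C 1 with hC'
  have hC'pos : 0 < C' := lt_of_lt_of_le one_pos (le_max_right _ _)
  have hu' : ∀ i, 0 ≤ u' i := fun i => (hu i).trans (hle i)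
  have hbound : ∀ (w : I → ℝ), (∀ i, 0 ≤ w i) → (∀ i, w i ≤ C') →
      ∀ s : Finset I, ‖∑ i ∈ s, w i • v i‖ ≤ C' * ‖∑ i ∈ s, v i‖ := by
    intro w hw hwc s
    have := finset_wsum_norm_le v hpos w (fun _ => C') hw hwc s
    simpa [← Finset.smul_sum, norm_smul, abs_of_pos hC'pos] using this
  have huC' : ∀ i, u i ≤ C' := fun i => (hle i).trans ((hC i).trans (le_max_left _ _))
  have hu'C' : ∀ i, u' i ≤ C' := fun i => (hC i).trans (le_max_left _ _)
  have hsummable : ∀ (w : I → ℝ), (∀ i, 0 ≤ w i) → (∀ i, w i ≤ C') →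
      Summable (fun i => w i • v i) := by
    intro w hw hwc
    rw [summable_iff_vanishing_norm]
    intro ε hε
    obtain ⟨s, hs⟩ := (summable_iff_vanishing_norm.1 hsum) (ε / C') (div_pos hε hC'pos)
    refine ⟨s, fun t ht => ?_⟩
    calc ‖∑ i ∈ t, w i • v i‖ ≤ C' * ‖∑ i ∈ t, v i‖ := hbound w hw hwc t
      _ < C' * (ε / C') := by
          exact mul_lt_mul_of_pos_left (hs t ht) hC'pos
      _ = ε := by field_simp
  have h1 : Summable (fun i => u i • v i) := hsummable u hu huC'
  have h2 : Summable (fun i => u' i • v i) := hsummable u' hu' hu'C'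
  refine ⟨h1, h2, ?_, ?_⟩
  · refine le_of_tendsto_of_tendsto' ((continuous_norm.tendsto _).comp h1.hasSum)
      ((continuous_norm.tendsto _).comp h2.hasSum) fun s => ?_
    exact finset_wsum_norm_le v hpos u u' hu hle s
  · rcases isEmpty_or_nonempty I with hI | hI
    · have hz : ∀ f : I → H, ∑' i, f i = 0 := fun f => by
        have hf : f = fun _ => 0 := funext fun i => isEmptyElim i
        simp [hf]
      simp [hz]
    · obtain ⟨i0⟩ := hI
      have hC0 : 0 ≤ C := le_trans ((hu i0).trans (hle i0)) (hC i0)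
      have hlim : Filter.Tendsto (fun s : Finset I => C * ‖∑ i ∈ s, v i‖)
          Filter.atTop (nhds (C * ‖∑' i, v i‖)) :=
        (Filter.Tendsto.const_mul C ((continuous_norm.tendsto _).comp hsum.hasSum))
      refine le_of_tendsto_of_tendsto' ((continuous_norm.tendsto _).comp h2.hasSum)
        hlim fun s => ?_
      have := finset_wsum_norm_le v hpos u' (fun _ => C) hu' hC s
      calc ‖∑ i ∈ s, u' i • v i‖ ≤ ‖∑ i ∈ s, C • v i‖ := this
        _ = C * ‖∑ i ∈ s, v i‖ := by
            rw [← Finset.smul_sum, norm_smul, Real.norm_eq_abs, abs_of_nonneg hC0]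
end

section
/- Let μ be a Γ-quasi-invariant probability measure on the compactification of a hyperbolic group Γ, s ∈ [1/2, 1], π_s the s-density representation, and E a (Γ, s, μ)-conformal conditional expectation, meaning E(π_s(g)ψ) = π_s*(g)E(ψ) on L²(μ) for all g ∈ Γ, where π_s* is the L²(μ)-adjoint. Then for every symmetric nonnegative finitely supported f on Γ (f^∨ = f), the operator π_s(f) on L²(μ) satisfies ‖π_s(f)‖_{op} ≤ ‖π_s(f)𝟏‖_{L^∞(μ)}. -/
open Filter MeasureTheory
open scoped RealInnerProductSpace ENNReal

/-- An invariant metric on a discrete group with uniformly locally finite balls. -/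
structure InvMetric (Γ : Type*) [Group Γ] where
  d : Γ → Γ → ℝ
  symm : ∀ g h, d g h = d h g
  triangle : ∀ g h k, d g k ≤ d g h + d h k
  refl : ∀ g, d g g = 0
  eq_of_dist_eq_zero : ∀ g h, d g h = 0 → g = h
  invariant : ∀ g x y, d (g * x) (g * y) = d x y
  finiteBalls : ∀ r : ℝ, {g : Γ | d g 1 ≤ r}.Finite

variable {Γ : Type*} [Group Γ]

/-- The growth exponent `δ = limsup_r (1/r) log |B_r|`. -/
noncomputable def growthExp (M : InvMetric Γ) : ℝ :=
  limsup (fun r : ℝ => Real.log (Nat.card {g : Γ | M.d g 1 ≤ r}) / r) atTop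

/-- The critical exponent of a nonnegative function: the abscissa of convergence of
the Poincaré series `∑_g e^{-t d(g,e)} f(g)` (infimum over nonnegative `t`). -/
noncomputable def critExp (M : InvMetric Γ) (f : Γ → ℝ) : ℝ :=
  sInf {t : ℝ | 0 ≤ t ∧ Summable fun g : Γ => Real.exp (-t * M.d g 1) * f g}

/-- The operator norm of `λ(f)` on `ℓ²(Γ)` for the left regular representation,
realized as the supremum of `|⟨λ(f)u, w⟩|` over finitely supported `u, w` of
`ℓ²`-norm at most one. -/
noncomputable def regNorm (f : Γ →₀ ℝ) : ℝ :=
  sSup {c : ℝ | ∃ u w : Γ →₀ ℝ,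
    (∑ x ∈ u.support, u x ^ 2) ≤ 1 ∧ (∑ x ∈ w.support, w x ^ 2) ≤ 1 ∧
    c = |∑ g ∈ f.support, ∑ x ∈ w.support, f g * u (g⁻¹ * x) * w x|}

/-- `π(f) = ∑_g f(g) π(g)` as a bounded operator. -/
noncomputable def opOf {H : Type*} [NormedAddCommGroup H] [InnerProductSpace ℝ H]
    (π : Γ →* (H ≃ₗᵢ[ℝ] H)) (f : Γ →₀ ℝ) : H →L[ℝ] H :=
  ∑ g ∈ f.support, f g • ((π g).toContinuousLinearEquiv : H →L[ℝ] H)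

/-- The Gromov product `(x,y)_o`. -/
noncomputable def gromov (M : InvMetric Γ) (x y o : Γ) : ℝ :=
  (M.d x o + M.d y o - M.d x y) / 2

/-- Gromov hyperbolicity. -/
def IsHyperbolic (M : InvMetric Γ) : Prop :=
  ∃ C : ℝ, ∀ x y z o : Γ, min (gromov M x z o) (gromov M z y o) - C ≤ gromov M x y o

/-- Strong hyperbolicity in the sense of Mineyev--Yu / Nica--Spakula. -/
def IsStronglyHyperbolic (M : InvMetric Γ) : Prop :=
  ∃ ε > (0 : ℝ), ∀ x y z o : Γ,
    Real.exp (-ε * gromov M x y o) ≤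
      Real.exp (-ε * gromov M x z o) + Real.exp (-ε * gromov M z y o)

/-- Roughly geodesic. -/
def IsRoughlyGeodesic (M : InvMetric Γ) : Prop :=
  ∃ C : ℝ, 0 ≤ C ∧ ∀ x y : Γ, ∀ t : ℝ, 0 ≤ t → t ≤ M.d x y →
    ∃ z : Γ, |M.d x z - t| ≤ C ∧ |M.d z y - (M.d x y - t)| ≤ C

/-- `π` has almost invariant vectors (equivalently, `1 ≺ π`). -/
def HasAlmostInvariantVectors {H : Type*} [NormedAddCommGroup H]
    [InnerProductSpace ℝ H] (π : Γ →* (H ≃ₗᵢ[ℝ] H)) : Prop :=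
  ∀ (S : Finset Γ) (ε : ℝ), 0 < ε → ∃ w : H, ‖w‖ = 1 ∧ ∀ g ∈ S, ‖π g w - w‖ < ε

/-- The ball average `Avr_r(π) = (1/|B_r|) ∑_{g∈B_r} π(g)`. -/
noncomputable def ballAvg {H : Type*} [NormedAddCommGroup H] [InnerProductSpace ℝ H]
    (M : InvMetric Γ) (π : Γ →* (H ≃ₗᵢ[ℝ] H)) (r : ℝ) : H →L[ℝ] H :=
  (Nat.card {g : Γ | M.d g 1 ≤ r} : ℝ)⁻¹ •
    ∑ g ∈ (M.finiteBalls r).toFinset, ((π g).toContinuousLinearEquiv : H →L[ℝ] H)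

/-!
Write `π(g)ψ = B g · ψ(g⁻¹ • ·)` with `B g = e^{-sδ b(g, ·)}`, so that `A = ∑ f(g) B g = π(f)𝟏`.
Cauchy–Schwarz with the weights `f(g) B g x` (a Schur test) bounds `|⟨π(f)v, w⟩|²` by
`∫ ∑ f(g) B g |v(g⁻¹ • ·)|² · ∫ A |w|²`. The second factor is at most `‖A‖_∞ ‖w‖₂²`.
Conformality moves the weights of the first onto `E`: `∫ B g · χ(g⁻¹ • ·) = ∫ E(B g) χ`, so the
first factor is `∫ E(A) |v|² ≤ ‖E(A)‖_∞ ‖v‖₂² ≤ ‖A‖_∞ ‖v‖₂²`, `E` being an `L^∞`-contraction.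
As `|v|²` is merely integrable, this is done for its truncations and passed to the limit by
monotone convergence.
-/

open Topology

theorem sq_sum_mul_mul_le {ι : Type*} (s : Finset ι) {a : ι → ℝ} (ha : ∀ i ∈ s, 0 ≤ a i)
    (u : ι → ℝ) (W : ℝ) :
    ((∑ i ∈ s, a i * u i) * W) ^ 2 ≤ (∑ i ∈ s, a i * u i ^ 2) * ((∑ i ∈ s, a i) * W ^ 2) := by
  rw [Finset.sum_mul, Finset.sum_mul s a]
  exact Finset.sum_sq_le_sum_mul_sum_of_sq_le_mul s
    (fun i hi => mul_nonneg (ha i hi) (sq_nonneg (u i)))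
    (fun i hi => mul_nonneg (ha i hi) (sq_nonneg W)) fun i _ => le_of_eq (by ring)

theorem lintegral_sq_le_mul_of_sq_le {α : Type*} [MeasurableSpace α] {μ : Measure α}
    {f g h : α → ℝ≥0∞} (hg : AEMeasurable g μ) (hh : AEMeasurable h μ)
    (hfgh : ∀ x, f x ^ 2 ≤ g x * h x) :
    (∫⁻ x, f x ∂μ) ^ 2 ≤ (∫⁻ x, g x ∂μ) * ∫⁻ x, h x ∂μ := by
  have hsqrt : ∀ x, f x ≤ g x ^ (1 / 2 : ℝ) * h x ^ (1 / 2 : ℝ) := fun x => by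
    rw [← ENNReal.mul_rpow_of_nonneg _ _ (by norm_num), ← ENNReal.rpow_le_rpow_iff two_pos,
      ← ENNReal.rpow_mul, ENNReal.rpow_two]
    simpa using hfgh x
  have holder := ENNReal.lintegral_mul_le_Lp_mul_Lq μ Real.HolderConjugate.two_two
    (hg.pow_const (1 / 2 : ℝ)) (hh.pow_const (1 / 2 : ℝ))
  simp only [Pi.mul_apply, ← ENNReal.rpow_mul] at holder
  norm_num at holder
  calc (∫⁻ x, f x ∂μ) ^ 2 ≤ ((∫⁻ x, g x ∂μ) ^ (1 / 2 : ℝ) * (∫⁻ x, h x ∂μ) ^ (1 / 2 : ℝ)) ^ 2 := by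
        gcongr
        exact (lintegral_mono hsqrt).trans holder
    _ = (∫⁻ x, g x ∂μ) * ∫⁻ x, h x ∂μ := by
        rw [mul_pow, ← ENNReal.rpow_two, ← ENNReal.rpow_two, ← ENNReal.rpow_mul,
          ← ENNReal.rpow_mul]
        norm_num

theorem lintegral_ofReal_sq_eq_eLpNorm_sq {α : Type*} [MeasurableSpace α] {μ : Measure α}
    (v : α → ℝ) : ∫⁻ x, ENNReal.ofReal (v x ^ 2) ∂μ = eLpNorm v 2 μ ^ 2 := by
  have := eLpNorm_nnreal_pow_eq_lintegral (f := v) (μ := μ) (p := 2) two_ne_zero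
  simp only [NNReal.coe_ofNat, ENNReal.rpow_two, ENNReal.coe_ofNat] at this
  rw [this]
  refine lintegral_congr fun x => ?_
  rw [Real.enorm_eq_ofReal_abs, ← ENNReal.ofReal_pow (abs_nonneg _), sq_abs]

theorem lintegral_ofReal_mul_sq_le {α : Type*} [MeasurableSpace α] {μ : Measure α}
    {A w : α → ℝ} (hA0 : ∀ x, 0 ≤ A x) (hw : AEMeasurable w μ) :
    ∫⁻ x, ENNReal.ofReal (A x * w x ^ 2) ∂μ ≤ eLpNorm A ⊤ μ * eLpNorm w 2 μ ^ 2 := by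
  rw [← lintegral_ofReal_sq_eq_eLpNorm_sq, ← lintegral_const_mul'' _ (by fun_prop)]
  refine lintegral_mono_ae ?_
  filter_upwards [enorm_ae_le_eLpNormEssSup A μ] with x hx
  rw [ENNReal.ofReal_mul (hA0 x), ← Real.enorm_eq_ofReal (hA0 x), eLpNorm_exponent_top]
  exact mul_le_mul_left hx _

theorem memLp_top_exp_const_mul {α : Type*} [MeasurableSpace α] {μ : Measure α} {b : α → ℝ}
    (hb : Measurable b) {C : ℝ} (hbC : ∀ x, |b x| ≤ C) (c : ℝ) :
    MemLp (fun x => Real.exp (c * b x)) ⊤ μ :=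
  memLp_top_of_bound (by fun_prop) (Real.exp (|c| * C)) <| ae_of_all _ fun x => by
    rw [Real.norm_eq_abs, Real.abs_exp, Real.exp_le_exp]
    calc c * b x ≤ |c| * |b x| := (le_abs_self _).trans (abs_mul _ _).le
      _ ≤ |c| * C := mul_le_mul_of_nonneg_left (hbC x) (abs_nonneg c)

theorem tendsto_lintegral_ofReal_sum_mul_min {α ι : Type*} [MeasurableSpace α] {μ : Measure α}
    (s : Finset ι) {a χ : ι → α → ℝ} (ha : ∀ i, AEMeasurable (a i) μ)
    (hχ : ∀ i, AEMeasurable (χ i) μ) (ha0 : ∀ i x, 0 ≤ a i x) :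
    Tendsto (fun n : ℕ => ∫⁻ x, ENNReal.ofReal (∑ i ∈ s, a i x * min (χ i x) n) ∂μ) atTop
      (𝓝 (∫⁻ x, ENNReal.ofReal (∑ i ∈ s, a i x * χ i x) ∂μ)) := by
  refine lintegral_tendsto_of_tendsto_of_monotone (fun n => by fun_prop)
    (ae_of_all _ fun x n m hnm => ?_) (ae_of_all _ fun x => ?_)
  · exact ENNReal.ofReal_le_ofReal <| Finset.sum_le_sum fun i _ =>
      mul_le_mul_of_nonneg_left (min_le_min_left _ (Nat.cast_le.2 hnm)) (ha0 i x)
  · have htrunc : ∀ᶠ n : ℕ in atTop, ∀ i ∈ s, min (χ i x) n = χ i x :=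
      (eventually_all_finset _).2 fun i _ => (eventually_ge_atTop ⌈χ i x⌉₊).mono
        fun n hn => min_eq_left ((Nat.le_ceil _).trans (Nat.cast_le.2 hn))
    refine tendsto_const_nhds.congr' (htrunc.mono fun n hn => ?_)
    congr 1
    exact Finset.sum_congr rfl fun i hi => by rw [hn i hi]

section WeightedTranslation

variable {X : Type*} [MeasurableSpace X] [MulAction Γ X]

/-- `E(π(g)𝟏) = π(g)*𝟏` weakly, for the weighted translations `π(g)ψ = B g · ψ(g⁻¹ • ·)`. -/
def IntertwinesWeightedTranslation (μ : Measure X) (E : (X → ℝ) →ₗ[ℝ] (X → ℝ))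
    (B : Γ → X → ℝ) : Prop :=
  ∀ g : Γ, ∀ χ : X → ℝ, Measurable χ → MemLp χ 2 μ →
    ∫ x, E (B g) x * χ x ∂μ = ∫ x, B g x * χ (g⁻¹ • x) ∂μ

namespace IntertwinesWeightedTranslation

variable {μ : Measure X} [IsFiniteMeasure μ] {E : (X → ℝ) →ₗ[ℝ] (X → ℝ)} {B : Γ → X → ℝ}

/-- Integrability of `E (B g)` is not assumed: it holds because its integral equals `∫ B g > 0`,
while a non-integrable function has integral `0`. -/
theorem integrable (hE : IntertwinesWeightedTranslation μ E B) (hB : ∀ g, MemLp (B g) ⊤ μ)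
    (hBpos : ∀ g x, 0 < B g x) (g : Γ) : Integrable (E (B g)) μ := by
  rcases eq_zero_or_neZero μ with rfl | _
  · exact integrable_zero_measure
  by_contra hint
  have hone := hE g 1 measurable_const (memLp_const 1)
  simp only [Pi.one_apply, mul_one, integral_undef hint] at hone
  have hpos : 0 < ∫ x, B g x ∂μ := by
    rw [integral_pos_iff_support_of_nonneg (fun x => (hBpos g x).le) ((hB g).integrable le_top),
      Function.support_eq_univ fun x => (hBpos g x).ne']
    exact NeZero.pos _
  exact hpos.ne hone

theorem sum_integral_mul_translate_le (hE : IntertwinesWeightedTranslation μ E B)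
    (hEtop : ∀ ψ, eLpNorm (E ψ) ⊤ μ ≤ eLpNorm ψ ⊤ μ) (hB : ∀ g, MemLp (B g) ⊤ μ)
    (hBpos : ∀ g x, 0 < B g x) (f : Γ →₀ ℝ) {χ : X → ℝ} (hχ : Measurable χ)
    (hχ0 : ∀ x, 0 ≤ χ x) {C : ℝ} (hχC : ∀ x, χ x ≤ C) :
    ∑ g ∈ f.support, f g * ∫ x, B g x * χ (g⁻¹ • x) ∂μ ≤
      (eLpNorm (fun x => ∑ g ∈ f.support, f g * B g x) ⊤ μ).toReal * ∫ x, χ x ∂μ := by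
  set A := fun x => ∑ g ∈ f.support, f g * B g x
  have hχbdd : ∀ᵐ x ∂μ, ‖χ x‖ ≤ C := ae_of_all _ fun x => by
    rw [Real.norm_eq_abs, abs_of_nonneg (hχ0 x)]; exact hχC x
  have hχ2 : MemLp χ 2 μ := MemLp.of_bound hχ.aestronglyMeasurable C hχbdd
  have hEA : E A = ∑ g ∈ f.support, f g • E (B g) := by
    rw [show A = ∑ g ∈ f.support, f g • B g by ext; simp [A], map_sum]
    simp only [map_smul]
  have hEAint : Integrable (E A) μ := by
    rw [hEA]
    exact integrable_finsetSum' _ fun g _ => (hE.integrable hB hBpos g).smul (f g)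
  have hEA_le : ∀ᵐ x ∂μ, E A x ≤ (eLpNorm A ⊤ μ).toReal := by
    have hfin : eLpNorm A ⊤ μ ≠ ⊤ :=
      (memLp_finsetSum _ fun g _ => (hB g).const_mul (f g)).eLpNorm_ne_top
    filter_upwards [enorm_ae_le_eLpNormEssSup (E A) μ] with x hx
    rw [← eLpNorm_exponent_top] at hx
    exact (le_abs_self _).trans (by simpa using ENNReal.toReal_mono hfin (hx.trans (hEtop A)))
  calc ∑ g ∈ f.support, f g * ∫ x, B g x * χ (g⁻¹ • x) ∂μ
      = ∑ g ∈ f.support, ∫ x, f g * E (B g) x * χ x ∂μ := by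
        refine Finset.sum_congr rfl fun g _ => ?_
        rw [← hE g χ hχ hχ2, ← integral_const_mul]
        simp only [mul_assoc]
    _ = ∫ x, E A x * χ x ∂μ := by
        rw [← integral_finsetSum _ fun g _ =>
          ((hE.integrable hB hBpos g).const_mul (f g)).mul_bdd hχ.aestronglyMeasurable hχbdd]
        simp [hEA, Finset.sum_mul]
    _ ≤ ∫ x, (eLpNorm A ⊤ μ).toReal * χ x ∂μ :=
        integral_mono_ae (hEAint.mul_bdd hχ.aestronglyMeasurable hχbdd)
          (hχ2.integrable one_le_two |>.const_mul _)
          (hEA_le.mono fun x hx => mul_le_mul_of_nonneg_right hx (hχ0 x))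
    _ = (eLpNorm A ⊤ μ).toReal * ∫ x, χ x ∂μ := integral_const_mul _ _

theorem lintegral_sum_mul_translate_le_of_le [MeasurableConstSMul Γ X]
    (hE : IntertwinesWeightedTranslation μ E B)
    (hEtop : ∀ ψ, eLpNorm (E ψ) ⊤ μ ≤ eLpNorm ψ ⊤ μ) (hB : ∀ g, MemLp (B g) ⊤ μ)
    (hBpos : ∀ g x, 0 < B g x) {f : Γ →₀ ℝ} (hf : ∀ g, 0 ≤ f g) {χ : X → ℝ}
    (hχ : Measurable χ) (hχ0 : ∀ x, 0 ≤ χ x) {C : ℝ} (hχC : ∀ x, χ x ≤ C) :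
    ∫⁻ x, ENNReal.ofReal (∑ g ∈ f.support, f g * B g x * χ (g⁻¹ • x)) ∂μ ≤
      eLpNorm (fun x => ∑ g ∈ f.support, f g * B g x) ⊤ μ * ∫⁻ x, ENNReal.ofReal (χ x) ∂μ := by
  set K := eLpNorm (fun x => ∑ g ∈ f.support, f g * B g x) ⊤ μ
  have hKfin : K ≠ ⊤ := (memLp_finsetSum _ fun g _ => (hB g).const_mul (f g)).eLpNorm_ne_top
  have hχbdd : ∀ y, ‖χ y‖ ≤ C := fun y => by
    rw [Real.norm_eq_abs, abs_of_nonneg (hχ0 y)]; exact hχC y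
  have hterm : ∀ g : Γ, Integrable (fun x => f g * B g x * χ (g⁻¹ • x)) μ := fun g =>
    (((hB g).integrable le_top).const_mul (f g)).mul_bdd
      (hχ.comp (measurable_const_smul g⁻¹)).aestronglyMeasurable (ae_of_all _ fun x => hχbdd _)
  rw [← ofReal_integral_eq_lintegral_ofReal (integrable_finsetSum _ fun g _ => hterm g)
      (ae_of_all _ fun x => Finset.sum_nonneg fun g _ =>
        mul_nonneg (mul_nonneg (hf g) (hBpos g x).le) (hχ0 _)),
    ← ofReal_integral_eq_lintegral_ofReal
      (Integrable.of_bound hχ.aestronglyMeasurable C (ae_of_all _ hχbdd)) (ae_of_all _ hχ0),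
    integral_finsetSum _ fun g _ => hterm g, ← ENNReal.ofReal_toReal hKfin,
    ← ENNReal.ofReal_mul ENNReal.toReal_nonneg]
  simp only [mul_assoc, integral_const_mul]
  exact ENNReal.ofReal_le_ofReal <| hE.sum_integral_mul_translate_le hEtop hB hBpos f hχ hχ0 hχC

theorem lintegral_sum_mul_translate_le [MeasurableConstSMul Γ X]
    (hE : IntertwinesWeightedTranslation μ E B)
    (hEtop : ∀ ψ, eLpNorm (E ψ) ⊤ μ ≤ eLpNorm ψ ⊤ μ) (hB : ∀ g, MemLp (B g) ⊤ μ)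
    (hBpos : ∀ g x, 0 < B g x) {f : Γ →₀ ℝ} (hf : ∀ g, 0 ≤ f g) {χ : X → ℝ}
    (hχ : Measurable χ) (hχ0 : ∀ x, 0 ≤ χ x) :
    ∫⁻ x, ENNReal.ofReal (∑ g ∈ f.support, f g * B g x * χ (g⁻¹ • x)) ∂μ ≤
      eLpNorm (fun x => ∑ g ∈ f.support, f g * B g x) ⊤ μ * ∫⁻ x, ENNReal.ofReal (χ x) ∂μ := by
  refine le_of_tendsto' (tendsto_lintegral_ofReal_sum_mul_min f.support
    (fun g => aemeasurable_const.mul (hB g).1.aemeasurable)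
    (fun g => (hχ.comp (measurable_const_smul g⁻¹)).aemeasurable)
    fun g x => mul_nonneg (hf g) (hBpos g x).le) fun n => ?_
  calc _ ≤ _ * ∫⁻ x, ENNReal.ofReal (min (χ x) n) ∂μ :=
        hE.lintegral_sum_mul_translate_le_of_le hEtop hB hBpos hf (hχ.min measurable_const)
          (fun x => le_min (hχ0 x) n.cast_nonneg) fun x => min_le_right _ _
    _ ≤ _ := by gcongr with x; exact min_le_left _ _

theorem abs_integral_sum_mul_translate_mul_le [MeasurableConstSMul Γ X]
    (hE : IntertwinesWeightedTranslation μ E B)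
    (hEtop : ∀ ψ, eLpNorm (E ψ) ⊤ μ ≤ eLpNorm ψ ⊤ μ) (hB : ∀ g, MemLp (B g) ⊤ μ)
    (hBpos : ∀ g x, 0 < B g x) {f : Γ →₀ ℝ} (hf : ∀ g, 0 ≤ f g) {v w : X → ℝ}
    (hv : Measurable v) (hv2 : MemLp v 2 μ) (hw2 : MemLp w 2 μ) :
    |∫ x, (∑ g ∈ f.support, f g * B g x * v (g⁻¹ • x)) * w x ∂μ| ≤
      (eLpNorm (fun x => ∑ g ∈ f.support, f g * B g x) ⊤ μ).toReal *
        (eLpNorm v 2 μ).toReal * (eLpNorm w 2 μ).toReal := by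
  set A := fun x => ∑ g ∈ f.support, f g * B g x
  set K := eLpNorm A ⊤ μ
  set P := fun x => ∑ g ∈ f.support, f g * B g x * v (g⁻¹ • x) ^ 2
  have hKfin : K ≠ ⊤ := (memLp_finsetSum _ fun g _ => (hB g).const_mul (f g)).eLpNorm_ne_top
  have hBm : ∀ g, AEMeasurable (B g) μ := fun g => (hB g).1.aemeasurable
  have hvg : ∀ g : Γ, Measurable fun x => v (g⁻¹ • x) := fun g =>
    hv.comp (measurable_const_smul g⁻¹)
  have hwm : AEMeasurable w μ := hw2.1.aemeasurable
  have hA0 : ∀ x, 0 ≤ A x := fun x =>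
    Finset.sum_nonneg fun g _ => mul_nonneg (hf g) (hBpos g x).le
  have hpt : ∀ x, ‖(∑ g ∈ f.support, f g * B g x * v (g⁻¹ • x)) * w x‖ₑ ^ 2 ≤
      ENNReal.ofReal (P x) * ENNReal.ofReal (A x * w x ^ 2) := fun x => by
    rw [Real.enorm_eq_ofReal_abs, ← ENNReal.ofReal_pow (abs_nonneg _), sq_abs,
      ← ENNReal.ofReal_mul (Finset.sum_nonneg fun g _ =>
        mul_nonneg (mul_nonneg (hf g) (hBpos g x).le) (sq_nonneg _))]
    exact ENNReal.ofReal_le_ofReal (sq_sum_mul_mul_le f.support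
      (fun g _ => mul_nonneg (hf g) (hBpos g x).le) (fun g => v (g⁻¹ • x)) (w x))
  have hP : ∫⁻ x, ENNReal.ofReal (P x) ∂μ ≤ K * eLpNorm v 2 μ ^ 2 := by
    rw [← lintegral_ofReal_sq_eq_eLpNorm_sq]
    exact hE.lintegral_sum_mul_translate_le hEtop hB hBpos hf (hv.pow_const 2)
      fun x => sq_nonneg _
  have hsq : ‖∫ x, (∑ g ∈ f.support, f g * B g x * v (g⁻¹ • x)) * w x ∂μ‖ₑ ^ 2 ≤
      (K * eLpNorm v 2 μ * eLpNorm w 2 μ) ^ 2 :=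
    calc _ ≤ (∫⁻ x, ‖(∑ g ∈ f.support, f g * B g x * v (g⁻¹ • x)) * w x‖ₑ ∂μ) ^ 2 :=
          pow_le_pow_left' (enorm_integral_le_lintegral_enorm _) 2
      _ ≤ (∫⁻ x, ENNReal.ofReal (P x) ∂μ) * ∫⁻ x, ENNReal.ofReal (A x * w x ^ 2) ∂μ :=
          lintegral_sq_le_mul_of_sq_le (by fun_prop) (by fun_prop) hpt
      _ ≤ (K * eLpNorm v 2 μ ^ 2) * (K * eLpNorm w 2 μ ^ 2) :=
          mul_le_mul' hP (lintegral_ofReal_mul_sq_le hA0 hwm)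
      _ = (K * eLpNorm v 2 μ * eLpNorm w 2 μ) ^ 2 := by ring
  rw [← Real.norm_eq_abs, ← toReal_enorm, ← ENNReal.toReal_mul, ← ENNReal.toReal_mul]
  exact ENNReal.toReal_mono
    (ENNReal.mul_ne_top (ENNReal.mul_ne_top hKfin hv2.eLpNorm_ne_top) hw2.eLpNorm_ne_top)
    ((ENNReal.pow_le_pow_left_iff two_ne_zero).1 hsq)

end IntertwinesWeightedTranslation

end WeightedTranslation

theorem conformal_expectation_bound_general (M : InvMetric Γ)
    {X : Type*} [TopologicalSpace X] [MeasurableSpace X] [BorelSpace X]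
    [MulAction Γ X] (hact : ∀ g : Γ, Continuous fun x : X => g • x)
    (μ : Measure X) [IsProbabilityMeasure μ]
    (b : Γ → X → ℝ) (hbmeas : ∀ g, Measurable (b g))
    (hbus : ∀ g : Γ, ∀ x : X, |b g x| ≤ M.d g 1)
    (s : ℝ)
    (E : (X → ℝ) →ₗ[ℝ] (X → ℝ))
    (hE1 : E (fun _ => 1) = fun _ => 1)
    (hEinfty : ∀ ψ : X → ℝ, eLpNorm (E ψ) ⊤ μ ≤ eLpNorm ψ ⊤ μ)
    (hconf : ∀ g : Γ, ∀ ψ χ : X → ℝ, Measurable ψ → Measurable χ →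
      MemLp ψ 2 μ → MemLp χ 2 μ →
      ∫ x, E (fun y => Real.exp (-(s * growthExp M) * b g y) * ψ (g⁻¹ • y)) x * χ x ∂μ =
        ∫ x, E ψ x * (Real.exp (-(s * growthExp M) * b g x) * χ (g⁻¹ • x)) ∂μ)
    (f : Γ →₀ ℝ) (hf : ∀ g, 0 ≤ f g)
    (v w : X → ℝ) (hv : Measurable v)
    (hv2 : MemLp v 2 μ) (hw2 : MemLp w 2 μ) :
    |∫ x, (∑ g ∈ f.support,
        f g * Real.exp (-(s * growthExp M) * b g x) * v (g⁻¹ • x)) * w x ∂μ| ≤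
      (eLpNorm (fun x => ∑ g ∈ f.support,
          f g * Real.exp (-(s * growthExp M) * b g x)) ⊤ μ).toReal *
        (eLpNorm v 2 μ).toReal * (eLpNorm w 2 μ).toReal := by
  have : MeasurableConstSMul Γ X := ⟨fun g => (hact g).measurable⟩
  have hE : IntertwinesWeightedTranslation μ E
      (fun g x => Real.exp (-(s * growthExp M) * b g x)) := fun g χ hχ hχ2 => by
    simpa [hE1] using hconf g (fun _ => 1) χ measurable_const hχ (memLp_const 1) hχ2
  exact hE.abs_integral_sum_mul_translate_mul_le hEinfty
    (fun g => memLp_top_exp_const_mul (hbmeas g) (hbus g) _) (fun g x => Real.exp_pos _) hf hv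
    hv2 hw2

/-- Let `μ` be a quasi-invariant probability on the compactification
`X` of a hyperbolic group `Γ`, `s ∈ [1/2, 1]`, `π_s` the `s`-density representation
`π_s(g)ψ(x) = e^{-sδ b_x(g,e)} ψ(g⁻¹x)` (with `b` the Busemann cocycle), and `E` a
`(Γ,s,μ)`-conformal conditional expectation (`E ∘ π_s(g) = π_s*(g) ∘ E` on `L²(μ)`).
Then for every symmetric nonnegative finitely supported `f`,
`‖π_s(f)‖_{op, L²(μ)} ≤ ‖π_s(f)𝟏‖_{L^∞(μ)}`. -/
theorem conformal_expectation_bound [Group.FG Γ] (M : InvMetric Γ)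
    (hhyp : IsStronglyHyperbolic M) (hrg : IsRoughlyGeodesic M)
    (hne : 0 < growthExp M)
    {X : Type*} [TopologicalSpace X] [CompactSpace X] [MeasurableSpace X] [BorelSpace X]
    [MulAction Γ X] (hact : ∀ g : Γ, Continuous fun x : X => g • x)
    (μ : Measure X) [IsProbabilityMeasure μ]
    (hqi : ∀ g : Γ, μ.map (fun x => g • x) ≪ μ ∧ μ ≪ μ.map (fun x => g • x))
    (b : Γ → X → ℝ) (hbmeas : ∀ g, Measurable (b g))
    (hbcoc : ∀ g h : Γ, ∀ x : X, b (g * h) x = b g x + b h (g⁻¹ • x))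
    (hbus : ∀ g : Γ, ∀ x : X, |b g x| ≤ M.d g 1)
    (s : ℝ) (hs : 1 / 2 ≤ s) (hs1 : s ≤ 1)
    (E : (X → ℝ) →ₗ[ℝ] (X → ℝ))
    (hE1 : E (fun _ => 1) = fun _ => 1)
    (hEpos : ∀ ψ : X → ℝ, (∀ x, 0 ≤ ψ x) → ∀ x, 0 ≤ E ψ x)
    (hEinfty : ∀ ψ : X → ℝ, eLpNorm (E ψ) ⊤ μ ≤ eLpNorm ψ ⊤ μ)
    (hEL2 : ∀ ψ : X → ℝ, eLpNorm (E ψ) 2 μ ≤ eLpNorm ψ 2 μ)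
    (hconf : ∀ g : Γ, ∀ ψ χ : X → ℝ, Measurable ψ → Measurable χ →
      MemLp ψ 2 μ → MemLp χ 2 μ →
      ∫ x, E (fun y => Real.exp (-(s * growthExp M) * b g y) * ψ (g⁻¹ • y)) x * χ x ∂μ =
        ∫ x, E ψ x * (Real.exp (-(s * growthExp M) * b g x) * χ (g⁻¹ • x)) ∂μ)
    (f : Γ →₀ ℝ) (hf : ∀ g, 0 ≤ f g) (hsym : ∀ g : Γ, f g⁻¹ = f g)
    (v w : X → ℝ) (hv : Measurable v) (hw : Measurable w)
    (hv2 : MemLp v 2 μ) (hw2 : MemLp w 2 μ) :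
    |∫ x, (∑ g ∈ f.support,
        f g * Real.exp (-(s * growthExp M) * b g x) * v (g⁻¹ • x)) * w x ∂μ| ≤
      (eLpNorm (fun x => ∑ g ∈ f.support,
          f g * Real.exp (-(s * growthExp M) * b g x)) ⊤ μ).toReal *
        (eLpNorm v 2 μ).toReal * (eLpNorm w 2 μ).toReal :=
  conformal_expectation_bound_general M hact μ b hbmeas hbus s E hE1 hEinfty hconf f hf v w hv hv2
    hw2
end

section
/- Let Γ be a non-elementary Gromov hyperbolic group with invariant strongly hyperbolic metric d of growth exponent δ, and let φ₁, φ₂ be pointwise nonnegative positive definite functions on Γ with δ(φ₁), δ(φ₂) ≥ δ/2. If the GNS representation π_{φ₁} is weakly contained in π_{φ₂}, then δ(φ₁) ≤ δ(φ₂). In particular, unitarily equivalent such representations have equal critical exponents. -/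
open Filter MeasureTheory
open scoped RealInnerProductSpace ENNReal

variable {Γ : Type*} [Group Γ]

/-!
Fix `t` slightly above `δ(φ₂)` and `β` slightly above `t`. Since `t ≥ δ/2`, we have `t + β > δ`,
and on a hyperbolic, roughly geodesic group this gives the convolution estimate
`e^{-t|·|} * e^{-β|·|} ≤ R e^{-t|·|}`. Hence the truncated weights `f_r = e^{-β|·|} 1_{B_r}` have
convolution powers `f_r^{*n} ≤ R^n e^{-t|·|}`, and as `φ₂` is `t`-summable the diagonal matrix
coefficients of `π₂(f_r)^n` on the cyclic span grow at most like `R^n`. The operator `π₂(f_r)` is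
symmetric, so `‖π₂(f_r)‖ ≤ R`. Weak containment transfers this bound to `π₁`, and
`⟪π₁(f_r) v₁, v₁⟫` is the partial Poincaré sum of `φ₁` at `β`; thus `δ(φ₁) ≤ β`.
-/

open Real Finset

lemma le_of_forall_pow_two_pow_le_mul_pow {a K R : ℝ} (hR : 0 < R)
    (h : ∀ k : ℕ, a ^ 2 ^ k ≤ K * R ^ 2 ^ k) : a ≤ R := by
  by_contra! hRa
  have hq : 1 < a / R := (one_lt_div hR).2 hRa
  obtain ⟨k, hk⟩ := pow_unbounded_of_one_lt K hq
  have hpow : (a / R) ^ k ≤ (a / R) ^ 2 ^ k := pow_le_pow_right₀ hq.le Nat.lt_two_pow_self.le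
  have hK : (a / R) ^ 2 ^ k ≤ K := by
    rw [div_pow, div_le_iff₀ (pow_pos hR _)]; exact h k
  linarith

lemma sum_pow_mul_pow_le {x y : ℝ} (hx : 1 < x) (hy₀ : 0 ≤ y) (hy : y < 1) (N L : ℕ) :
    ∑ nm ∈ range (N + 1) ×ˢ range (L + 1), x ^ (nm.1 + 1) * y ^ nm.2
      ≤ x * (x / (x - 1)) * x ^ N * (1 - y)⁻¹ := by
  have hx₁ : 0 < x - 1 := sub_pos.2 hx
  have hxsum : ∑ n ∈ range (N + 1), x ^ (n + 1) ≤ x * (x / (x - 1)) * x ^ N := by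
    simp_rw [pow_succ, ← sum_mul, geom_sum_eq hx.ne']
    rw [div_mul_eq_mul_div, div_le_iff₀ hx₁]
    field_simp
    rw [pow_succ']
    linarith
  have hysum : ∑ m ∈ range (L + 1), y ^ m ≤ (1 - y)⁻¹ :=
    ((summable_geometric_of_lt_one hy₀ hy).sum_le_tsum _ fun _ _ => by positivity).trans_eq
      (tsum_geometric_of_lt_one hy₀ hy)
  calc ∑ nm ∈ range (N + 1) ×ˢ range (L + 1), x ^ (nm.1 + 1) * y ^ nm.2
      = (∑ n ∈ range (N + 1), x ^ (n + 1)) * ∑ m ∈ range (L + 1), y ^ m := by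
        rw [sum_mul_sum, sum_product]
    _ ≤ _ := mul_le_mul hxsum hysum (sum_nonneg fun _ _ => by positivity) (by positivity)

namespace ContinuousLinearMap

variable {𝕜 E F : Type*} [NontriviallyNormedField 𝕜] [NormedAddCommGroup E] [NormedSpace 𝕜 E]
  [NormedAddCommGroup F] [NormedSpace 𝕜 F]

lemma opNorm_le_of_dense (S : E →L[𝕜] F) {s : Set E} (hs : Dense s) {R : ℝ} (hR : 0 ≤ R)
    (h : ∀ u ∈ s, ‖S u‖ ≤ R * ‖u‖) : ‖S‖ ≤ R :=
  S.opNorm_le_bound hR fun u => by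
    have hclosed : IsClosed {u | ‖S u‖ ≤ R * ‖u‖} := isClosed_le (by fun_prop) (by fun_prop)
    exact hclosed.closure_subset_iff.2 h (hs u)

end ContinuousLinearMap

namespace LinearIsometryEquiv

variable {𝕜 E : Type*} [NontriviallyNormedField 𝕜] [NormedAddCommGroup E] [NormedSpace 𝕜 E]

noncomputable def toContinuousLinearMapHom : (E ≃ₗᵢ[𝕜] E) →* (E →L[𝕜] E) where
  toFun e := e.toContinuousLinearEquiv
  map_one' := by ext; simp
  map_mul' _ _ := by ext; simp

end LinearIsometryEquiv

namespace LinearMap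

variable {𝕜 E : Type*} [RCLike 𝕜] [NormedAddCommGroup E] [InnerProductSpace 𝕜 E]

def orbitGrowthSubmodule (T : E →ₗ[𝕜] E) (R : ℝ) : Submodule 𝕜 E where
  carrier := {u | ∃ K, ∀ n, ‖(T ^ n) u‖ ≤ K * R ^ n}
  zero_mem' := ⟨0, by simp⟩
  add_mem' := by
    rintro u w ⟨K₁, h₁⟩ ⟨K₂, h₂⟩
    refine ⟨K₁ + K₂, fun n => ?_⟩
    rw [map_add, add_mul]
    exact (norm_add_le _ _).trans (add_le_add (h₁ n) (h₂ n))
  smul_mem' := by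
    rintro c u ⟨K, h⟩
    refine ⟨‖c‖ * K, fun n => ?_⟩
    rw [map_smul, norm_smul, mul_assoc]
    exact mul_le_mul_of_nonneg_left (h n) (norm_nonneg c)

namespace IsSymmetric

variable {T : E →ₗ[𝕜] E}

open RCLike in
lemma norm_pow_apply_sq (hT : T.IsSymmetric) (u : E) (m : ℕ) :
    ‖(T ^ m) u‖ ^ 2 = re (inner 𝕜 ((T ^ (2 * m)) u) u) := by
  rw [← inner_self_eq_norm_sq (𝕜 := 𝕜), hT.pow m, ← Module.End.mul_apply, ← pow_add, ← two_mul,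
    ← inner_conj_symm, conj_re]

lemma norm_apply_pow_two_pow_le (hT : T.IsSymmetric) {u : E} (hu : ‖u‖ = 1) (k : ℕ) :
    ‖T u‖ ^ 2 ^ k ≤ ‖(T ^ 2 ^ k) u‖ := by
  induction k with
  | zero => simp
  | succ k ih =>
    calc ‖T u‖ ^ 2 ^ (k + 1) = (‖T u‖ ^ 2 ^ k) ^ 2 := by rw [pow_succ, pow_mul]
      _ ≤ ‖(T ^ 2 ^ k) u‖ ^ 2 := by gcongr
      _ ≤ ‖(T ^ 2 ^ (k + 1)) u‖ := by
        rw [hT.norm_pow_apply_sq, ← pow_succ']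
        simpa [hu] using re_inner_le_norm (𝕜 := 𝕜) ((T ^ 2 ^ (k + 1)) u) u

lemma norm_apply_le_of_mem_orbitGrowthSubmodule (hT : T.IsSymmetric) {R : ℝ} (hR : 0 < R)
    {u : E} (hu : u ∈ T.orbitGrowthSubmodule R) : ‖T u‖ ≤ R * ‖u‖ := by
  rcases eq_or_ne u 0 with rfl | hu₀
  · simp
  obtain ⟨K, hK⟩ := (T.orbitGrowthSubmodule R).smul_mem ((‖u‖⁻¹ : ℝ) : 𝕜) hu
  have hunit : ‖((‖u‖⁻¹ : ℝ) : 𝕜) • u‖ = 1 := by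
    rw [norm_smul, RCLike.norm_ofReal, abs_inv, abs_norm, inv_mul_cancel₀ (norm_ne_zero_iff.2 hu₀)]
  have := le_of_forall_pow_two_pow_le_mul_pow hR fun k =>
    (hT.norm_apply_pow_two_pow_le hunit k).trans (hK _)
  rwa [map_smul, norm_smul, RCLike.norm_ofReal, abs_inv, abs_norm,
    inv_mul_le_iff₀ (norm_pos_iff.2 hu₀), mul_comm] at this

end IsSymmetric

end LinearMap

namespace InvMetric

variable (M : InvMetric Γ)

lemma d_nonneg (g h : Γ) : 0 ≤ M.d g h := by
  linarith [M.triangle g h g, M.refl g, M.symm g h]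

lemma d_inv_mul_one (a b : Γ) : M.d (a⁻¹ * b) 1 = M.d a b := by
  rw [← M.invariant a, mul_inv_cancel_left, mul_one, M.symm]

lemma d_inv_one (g : Γ) : M.d g⁻¹ 1 = M.d g 1 := by
  simpa using M.d_inv_mul_one g 1

lemma d_conj_le (x k : Γ) : M.d (x⁻¹ * k * x) 1 ≤ M.d k 1 + 2 * M.d x 1 := by
  have hconj : M.d (x⁻¹ * k * x) 1 = M.d (k * x) x := by
    rw [← M.invariant x, mul_one, show x * (x⁻¹ * k * x) = k * x by group]
  have hleft : M.d (k * x) k = M.d x 1 := by rw [← M.invariant k x 1, mul_one]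
  linarith [M.triangle (k * x) k x, M.triangle k 1 x, M.symm 1 x]

noncomputable def ball (r : ℝ) : Finset Γ := (M.finiteBalls r).toFinset

variable {M}

@[simp]
lemma mem_ball {r : ℝ} {g : Γ} : g ∈ M.ball r ↔ M.d g 1 ≤ r := Set.Finite.mem_toFinset _

lemma one_mem_ball {r : ℝ} (hr : 0 ≤ r) : 1 ∈ M.ball r := by simpa [M.refl] using hr

lemma ball_mono : Monotone M.ball := fun _ _ hrs _ hg => by
  rw [mem_ball] at hg ⊢; exact hg.trans hrs

lemma exists_card_ball_le (hδ : 0 < growthExp M) {b : ℝ} (hb : growthExp M < b) :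
    ∃ C, ∀ ρ, 0 ≤ ρ → (#(M.ball ρ) : ℝ) ≤ C * exp (b * ρ) := by
  have hbdd : IsBoundedUnder (· ≤ ·) atTop
      fun r : ℝ => log (Nat.card {g : Γ | M.d g 1 ≤ r}) / r := by
    by_contra h
    exact hδ.ne' (Real.limsup_of_not_isBoundedUnder h)
  obtain ⟨R₀, hR₀⟩ := eventually_atTop.1 (eventually_lt_of_limsup_lt hb hbdd)
  set R₁ := max R₀ 1
  refine ⟨#(M.ball R₁) + 1, fun ρ hρ => ?_⟩
  have hexp : 1 ≤ exp (b * ρ) := one_le_exp (mul_nonneg (hδ.trans hb).le hρ)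
  rcases le_or_gt ρ R₁ with hle | hlt
  · have hmono : (#(M.ball ρ) : ℝ) ≤ #(M.ball R₁) := by
      exact_mod_cast card_le_card (ball_mono hle)
    nlinarith
  · have hρ₀ : 0 < ρ := by linarith [le_max_right R₀ 1]
    have hlog := hR₀ ρ (le_max_left R₀ 1 |>.trans hlt.le)
    rw [div_lt_iff₀ hρ₀, Nat.card_eq_card_finite_toFinset (M.finiteBalls ρ)] at hlog
    have hcard : (#(M.ball ρ) : ℝ) ≤ exp (b * ρ) := by
      rw [← log_le_iff_le_exp (by exact_mod_cast card_pos.2 ⟨1, one_mem_ball hρ⟩)]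
      exact hlog.le
    nlinarith

lemma gromov_nonneg (x y o : Γ) : 0 ≤ gromov M x y o := by
  unfold gromov; linarith [M.triangle x o y, M.symm o y]

lemma gromov_le_d (h k : Γ) : gromov M h k 1 ≤ M.d k 1 := by
  unfold gromov; linarith [M.triangle h k 1, M.symm h k]

lemma d_eq_gromov_add_gromov (h k : Γ) : M.d h 1 = gromov M h k 1 + gromov M 1 k h := by
  unfold gromov; linarith [M.symm 1 h, M.symm k h, M.symm 1 k]

lemma d_eq_sub_gromov_add_gromov (h k : Γ) :
    M.d h k = M.d k 1 - gromov M h k 1 + gromov M 1 k h := by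
  unfold gromov; linarith [M.symm 1 h, M.symm k h, M.symm 1 k]

end InvMetric

open InvMetric

lemma IsStronglyHyperbolic.isHyperbolic {M : InvMetric Γ} (hM : IsStronglyHyperbolic M) :
    IsHyperbolic M := by
  obtain ⟨ε, hε, hM⟩ := hM
  refine ⟨log 2 / ε, fun x y z o => ?_⟩
  set m := min (gromov M x z o) (gromov M z y o)
  have hxz : exp (-ε * gromov M x z o) ≤ exp (-ε * m) :=
    exp_le_exp.2 (by nlinarith [min_le_left (gromov M x z o) (gromov M z y o)])
  have hzy : exp (-ε * gromov M z y o) ≤ exp (-ε * m) :=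
    exp_le_exp.2 (by nlinarith [min_le_right (gromov M x z o) (gromov M z y o)])
  have hexp : exp (-ε * gromov M x y o) ≤ exp (log 2 + -ε * m) := by
    rw [exp_add, exp_log two_pos]; linarith [hM x y z o]
  have : (m - gromov M x y o) * ε ≤ log 2 := by nlinarith [exp_le_exp.1 hexp]
  linarith [(le_div_iff₀ hε).2 this]

lemma IsHyperbolic.exists_nonneg {M : InvMetric Γ} (hM : IsHyperbolic M) :
    ∃ C, 0 ≤ C ∧ ∀ x y z o : Γ,
      min (gromov M x z o) (gromov M z y o) - C ≤ gromov M x y o := by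
  obtain ⟨C, hC⟩ := hM
  exact ⟨max C 0, le_max_right _ _,
    fun x y z o => (sub_le_sub_left (le_max_left _ _) _).trans (hC x y z o)⟩

namespace InvMetric

variable {M : InvMetric Γ}

lemma d_le_of_roughGeodesic_point {Ch Crg : ℝ}
    (hyp : ∀ x y z o : Γ, min (gromov M x z o) (gromov M z y o) - Ch ≤ gromov M x y o)
    {h k z : Γ} {n : ℝ} (hz₁ : |M.d 1 z - n| ≤ Crg) (hz₂ : |M.d z k - (M.d 1 k - n)| ≤ Crg)
    (hn : n ≤ gromov M h k 1) :
    M.d h z ≤ gromov M 1 k h + (gromov M h k 1 - n) + 3 * Crg + 2 * Ch := by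
  obtain ⟨hz₁lo, hz₁hi⟩ := abs_le.1 hz₁
  obtain ⟨hz₂lo, hz₂hi⟩ := abs_le.1 hz₂
  have hkz : n - Crg ≤ gromov M k z 1 := by
    unfold gromov; linarith [M.symm 1 z, M.symm z k, M.symm 1 k]
  have hhz : n - Crg - Ch ≤ gromov M h z 1 :=
    le_trans (by linarith [le_min (hn.trans' (by linarith)) hkz]) (hyp h z k 1)
  have hd : M.d h z = M.d h 1 + M.d z 1 - 2 * gromov M h z 1 := by unfold gromov; ring
  linarith [M.d_eq_gromov_add_gromov h k, M.symm 1 z]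

/-- The points of such a fiber all lie near the point at distance `n` from `1` on a rough geodesic
to `k`, so a translate of the fiber fits in a ball. -/
lemma exists_card_filter_le_card_ball (hhyp : IsHyperbolic M) (hrg : IsRoughlyGeodesic M) :
    ∃ C, 0 ≤ C ∧ ∀ (k : Γ) (E : Finset Γ) (n m : ℕ),
      #{h ∈ E | (⌊gromov M h k 1⌋₊, ⌊gromov M 1 k h⌋₊) = (n, m)} ≤ #(M.ball (m + C)) := by
  obtain ⟨Ch, hCh, hyp⟩ := hhyp.exists_nonneg
  obtain ⟨Crg, hCrg, hgeod⟩ := hrg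
  refine ⟨2 + 3 * Crg + 2 * Ch, by positivity, fun k E n m => ?_⟩
  set F := {h ∈ E | (⌊gromov M h k 1⌋₊, ⌊gromov M 1 k h⌋₊) = (n, m)}
  have hbox : ∀ h ∈ F,
      (n : ℝ) ≤ gromov M h k 1 ∧ gromov M h k 1 < n + 1 ∧ gromov M 1 k h < m + 1 := by
    intro h hh
    obtain ⟨rfl, rfl⟩ := Prod.mk.inj (mem_filter.1 hh).2
    exact ⟨Nat.floor_le (gromov_nonneg _ _ _), Nat.lt_floor_add_one _, Nat.lt_floor_add_one _⟩
  rcases F.eq_empty_or_nonempty with hF | ⟨h₀, hh₀⟩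
  · simp [hF]
  have hnk : (n : ℝ) ≤ M.d 1 k := M.symm k 1 ▸ (hbox h₀ hh₀).1.trans (gromov_le_d h₀ k)
  obtain ⟨z, hz₁, hz₂⟩ := hgeod 1 k n n.cast_nonneg hnk
  refine card_le_card_of_injOn (z⁻¹ * ·) (fun h hh => ?_) (mul_right_injective _).injOn
  obtain ⟨hp, hp', hq⟩ := hbox h hh
  rw [mem_coe, mem_ball, d_inv_mul_one, M.symm]
  linarith [d_le_of_roughGeodesic_point hyp hz₁ hz₂ hp]

lemma sum_filter_floor_gromov_le {α β A : ℝ} (hα : 0 ≤ α) (hαβ : α < β) (k : Γ) (E : Finset Γ)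
    (n m : ℕ) (hcard : (#{h ∈ E | (⌊gromov M h k 1⌋₊, ⌊gromov M 1 k h⌋₊) = (n, m)} : ℝ) ≤ A) :
    ∑ h ∈ E with (⌊gromov M h k 1⌋₊, ⌊gromov M 1 k h⌋₊) = (n, m),
        exp (-α * M.d h 1) * exp (-β * M.d h k)
      ≤ A * exp (-β * M.d k 1 + (β - α) * ((n + 1 : ℕ) : ℝ) - (α + β) * m) := by
  refine (sum_le_card_nsmul _ _ _ fun h hh => ?_).trans (by rw [nsmul_eq_mul]; gcongr)
  obtain ⟨rfl, rfl⟩ := Prod.mk.inj (mem_filter.1 hh).2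
  have hp := Nat.lt_floor_add_one (gromov M h k 1)
  have hq := Nat.floor_le (gromov_nonneg (M := M) 1 k h)
  rw [← exp_add, M.d_eq_gromov_add_gromov h k, M.d_eq_sub_gromov_add_gromov h k]
  exact exp_le_exp.2 (by push_cast; nlinarith)

/-- Split `h` according to the integer parts of `(h,k)_1` and `(1,k)_h`: each piece lies in a
translated ball, and the weights form two convergent geometric series. -/
theorem exists_sum_exp_mul_exp_le (hhyp : IsHyperbolic M) (hrg : IsRoughlyGeodesic M)
    {b Cg : ℝ} (hgrowth : ∀ ρ, 0 ≤ ρ → (#(M.ball ρ) : ℝ) ≤ Cg * exp (b * ρ))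
    {α β : ℝ} (hα : 0 ≤ α) (hαβ : α < β) (hb : b < α + β) :
    ∃ R, 0 < R ∧ ∀ (k : Γ) (E : Finset Γ),
      ∑ h ∈ E, exp (-α * M.d h 1) * exp (-β * M.d h k) ≤ R * exp (-α * M.d k 1) := by
  obtain ⟨C, hC, hshadow⟩ := exists_card_filter_le_card_ball hhyp hrg
  have hCg : 1 ≤ Cg := by
    simpa using (Nat.one_le_cast.2 (card_pos.2 ⟨1, one_mem_ball le_rfl⟩)).trans (hgrowth 0 le_rfl)
  set x := exp (β - α) with hx_def
  set y := exp (b - (α + β)) with hy_def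
  have hx : 1 < x := one_lt_exp_iff.2 (by linarith)
  have hy : y < 1 := exp_lt_one_iff.2 (by linarith)
  set K := Cg * exp (b * C) with hK_def
  refine ⟨K * (x * (x / (x - 1))) * (1 - y)⁻¹, ?_, fun k E => ?_⟩
  · have := sub_pos.2 hx; have := sub_pos.2 hy; positivity
  set κ : Γ → ℕ × ℕ := fun h => (⌊gromov M h k 1⌋₊, ⌊gromov M 1 k h⌋₊)
  set N := ⌊M.d k 1⌋₊
  set L := E.sup fun h => (κ h).2
  have hmaps : ∀ h ∈ E, κ h ∈ range (N + 1) ×ˢ range (L + 1) := fun h hh => by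
    simp only [mem_product, mem_range, Nat.lt_succ_iff]
    exact ⟨Nat.floor_mono (gromov_le_d h k), le_sup (f := fun h => (κ h).2) hh⟩
  have hfiber : ∀ n m : ℕ, ∑ h ∈ E with κ h = (n, m), exp (-α * M.d h 1) * exp (-β * M.d h k)
      ≤ K * exp (-β * M.d k 1) * (x ^ (n + 1) * y ^ m) := by
    intro n m
    refine (sum_filter_floor_gromov_le hα hαβ k E n m
      ((Nat.cast_le.2 (hshadow k E n m)).trans (hgrowth _ (by positivity)))).trans_eq ?_
    simp only [hK_def, hx_def, hy_def, ← exp_nat_mul, mul_assoc, ← exp_add]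
    ring_nf
  have hxN : x ^ N ≤ exp ((β - α) * M.d k 1) := by
    rw [← exp_nat_mul, mul_comm]
    exact exp_le_exp.2 (mul_le_mul_of_nonneg_left (Nat.floor_le (M.d_nonneg k 1)) (by linarith))
  have hexp : exp (-β * M.d k 1) * exp ((β - α) * M.d k 1) = exp (-α * M.d k 1) := by
    rw [← exp_add]; ring_nf
  calc ∑ h ∈ E, exp (-α * M.d h 1) * exp (-β * M.d h k)
      = ∑ nm ∈ range (N + 1) ×ˢ range (L + 1),
          ∑ h ∈ E with κ h = nm, exp (-α * M.d h 1) * exp (-β * M.d h k) :=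
        (sum_fiberwise_of_maps_to hmaps _).symm
    _ ≤ ∑ nm ∈ range (N + 1) ×ˢ range (L + 1),
          K * exp (-β * M.d k 1) * (x ^ (nm.1 + 1) * y ^ nm.2) :=
        sum_le_sum fun nm _ => hfiber nm.1 nm.2
    _ ≤ K * exp (-β * M.d k 1) * (x * (x / (x - 1)) * x ^ N * (1 - y)⁻¹) := by
        rw [← mul_sum]
        gcongr
        exact sum_pow_mul_pow_le hx (exp_pos _).le hy N L
    _ ≤ K * exp (-β * M.d k 1) * (x * (x / (x - 1)) * exp ((β - α) * M.d k 1) * (1 - y)⁻¹) := by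
        have := sub_pos.2 hx; have := sub_pos.2 hy
        gcongr
    _ = K * (x * (x / (x - 1))) * (1 - y)⁻¹ * exp (-α * M.d k 1) := by
        rw [← hexp]; ring

variable (M) in
noncomputable def ballWeight (β r : ℝ) : Γ →₀ ℝ :=
  Finsupp.indicator (M.ball r) fun g _ => exp (-β * M.d g 1)

lemma ballWeight_apply (β r : ℝ) (g : Γ) :
    M.ballWeight β r g = if M.d g 1 ≤ r then exp (-β * M.d g 1) else 0 := by
  classical
  rw [ballWeight, Finsupp.indicator_apply]
  simp only [mem_ball, dite_eq_ite]

lemma ballWeight_nonneg (β r : ℝ) (g : Γ) : 0 ≤ M.ballWeight β r g := by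
  rw [ballWeight_apply]; split_ifs <;> positivity

lemma ballWeight_le (β r : ℝ) (g : Γ) : M.ballWeight β r g ≤ exp (-β * M.d g 1) := by
  rw [ballWeight_apply]; split_ifs <;> first | exact le_rfl | positivity

lemma ballWeight_inv (β r : ℝ) (g : Γ) : M.ballWeight β r g⁻¹ = M.ballWeight β r g := by
  simp only [ballWeight_apply, d_inv_one]

lemma support_ballWeight_subset (β r : ℝ) : (M.ballWeight β r).support ⊆ M.ball r :=
  Finsupp.support_indicator_subset _ _

lemma coeff_pow_le_of_sum_exp_mul_exp_le {α β R : ℝ} (hR : 0 ≤ R)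
    (hconv : ∀ (k : Γ) (E : Finset Γ),
      ∑ h ∈ E, exp (-α * M.d h 1) * exp (-β * M.d h k) ≤ R * exp (-α * M.d k 1))
    {f : MonoidAlgebra ℝ Γ} (hf₀ : ∀ g, 0 ≤ f.coeff g) (hf : ∀ g, f.coeff g ≤ exp (-β * M.d g 1))
    (n : ℕ) (k : Γ) : (f ^ n).coeff k ≤ R ^ n * exp (-α * M.d k 1) := by
  classical
  induction n generalizing k with
  | zero =>
    rw [pow_zero, pow_zero, one_mul, MonoidAlgebra.one_def, MonoidAlgebra.coeff_single,
      Finsupp.single_apply]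
    split_ifs with h
    · rw [← h, M.refl, mul_zero, exp_zero]
    · positivity
  | succ n ih =>
    rw [pow_succ, MonoidAlgebra.coeff_mul_apply_left, Finsupp.sum]
    calc ∑ h ∈ (f ^ n).coeff.support, (f ^ n).coeff h * f.coeff (h⁻¹ * k)
        ≤ ∑ h ∈ (f ^ n).coeff.support, R ^ n * (exp (-α * M.d h 1) * exp (-β * M.d h k)) :=
          sum_le_sum fun h _ => by
            rw [← mul_assoc, ← M.d_inv_mul_one h k]
            exact mul_le_mul (ih h) (hf _) (hf₀ _) (by positivity)
      _ ≤ R ^ n * (R * exp (-α * M.d k 1)) := by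
          rw [← mul_sum]; gcongr; exact hconv k _
      _ = R ^ (n + 1) * exp (-α * M.d k 1) := by ring

lemma summable_of_sum_ball_le {f : Γ → ℝ} (hf : 0 ≤ f) {C : ℝ}
    (h : ∀ r, ∑ g ∈ M.ball r, f g ≤ C) : Summable f :=
  summable_of_sum_le hf fun s => by
    obtain ⟨r, hr⟩ := (s.image fun g => M.d g 1).bddAbove
    have hs : s ⊆ M.ball r := fun g hg => mem_ball.2 (hr (mem_coe.2 (mem_image_of_mem _ hg)))
    exact (sum_le_sum_of_subset_of_nonneg hs fun g _ _ => hf g).trans (h r)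

end InvMetric

lemma critExp_le_of_summable {M : InvMetric Γ} {φ : Γ → ℝ} {s : ℝ} (hs : 0 ≤ s)
    (h : Summable fun g => exp (-s * M.d g 1) * φ g) : critExp M φ ≤ s :=
  csInf_le ⟨0, fun _ ht => ht.1⟩ ⟨hs, h⟩

lemma exists_summable_of_critExp_lt {M : InvMetric Γ} {φ : Γ → ℝ} (hpos : 0 < critExp M φ)
    {s : ℝ} (hs : critExp M φ < s) :
    ∃ t, critExp M φ ≤ t ∧ t < s ∧ Summable fun g => exp (-t * M.d g 1) * φ g := by
  have hne : {t : ℝ | 0 ≤ t ∧ Summable fun g => exp (-t * M.d g 1) * φ g}.Nonempty := by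
    by_contra h
    rw [Set.not_nonempty_iff_eq_empty] at h
    rw [critExp, h, Real.sInf_empty] at hpos
    exact hpos.false
  obtain ⟨t, ⟨ht₀, ht⟩, hts⟩ := exists_lt_of_csInf_lt hne hs
  exact ⟨t, critExp_le_of_summable ht₀ ht, hts, ht⟩

section Representation

variable {H : Type*} [NormedAddCommGroup H] [InnerProductSpace ℝ H] (ρ : Γ →* (H ≃ₗᵢ[ℝ] H))
  {M : InvMetric Γ} {v : H} {φ : Γ → ℝ}

lemma opOf_coeff_pow (f : MonoidAlgebra ℝ Γ) (n : ℕ) :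
    opOf ρ (f ^ n).coeff = opOf ρ f.coeff ^ n := by
  have hlift : ∀ F : MonoidAlgebra ℝ Γ, opOf ρ F.coeff =
      MonoidAlgebra.lift ℝ (H →L[ℝ] H) Γ (LinearIsometryEquiv.toContinuousLinearMapHom.comp ρ) F :=
    fun F => by rw [MonoidAlgebra.lift_apply]; rfl
  rw [hlift, hlift, map_pow]

lemma inner_opOf_apply (f : Γ →₀ ℝ) (u w : H) :
    ⟪opOf ρ f u, w⟫ = ∑ g ∈ f.support, f g * ⟪ρ g u, w⟫ := by
  simp [opOf, sum_inner, real_inner_smul_left]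

lemma inner_map_left_eq_inv (g : Γ) (u w : H) : ⟪ρ g u, w⟫ = ⟪ρ g⁻¹ w, u⟫ := by
  rw [LinearIsometryEquiv.inner_map_eq_flip, map_inv, LinearIsometryEquiv.inv_def,
    real_inner_comm]

lemma isSymmetric_opOf {f : Γ →₀ ℝ} (hf : ∀ g, f g⁻¹ = f g) :
    (opOf ρ f : H →ₗ[ℝ] H).IsSymmetric := fun u w => by
  rw [ContinuousLinearMap.coe_coe, ← real_inner_comm u, inner_opOf_apply, inner_opOf_apply]
  refine sum_nbij' (·⁻¹) (·⁻¹) (by simp [hf]) (by simp [hf]) (by simp) (by simp) fun g _ => ?_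
  rw [hf, inner_map_left_eq_inv]

lemma inner_opOf_ballWeight (hφ : ∀ g, φ g = ⟪ρ g v, v⟫) (β r : ℝ) :
    ⟪opOf ρ (M.ballWeight β r) v, v⟫ = ∑ g ∈ M.ball r, exp (-β * M.d g 1) * φ g := by
  rw [inner_opOf_apply, sum_subset (M.support_ballWeight_subset β r) fun g _ hg => by
    rw [Finsupp.notMem_support_iff.1 hg, zero_mul]]
  refine sum_congr rfl fun g hg => ?_
  rw [ballWeight_apply, if_pos (mem_ball.1 hg), hφ]

lemma inner_opOf_apply_translate_le (hφ : ∀ g, φ g = ⟪ρ g v, v⟫) (hpos : ∀ g, 0 ≤ φ g)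
    {α B : ℝ} (hα : 0 ≤ α) (hB : 0 ≤ B) (hsum : Summable fun g => exp (-α * M.d g 1) * φ g)
    (F : Γ →₀ ℝ) (hF : ∀ k, F k ≤ B * exp (-α * M.d k 1)) (x : Γ) :
    ⟪opOf ρ F (ρ x v), ρ x v⟫ ≤ B * exp (2 * α * M.d x 1) * ∑' g, exp (-α * M.d g 1) * φ g := by
  classical
  have hconj : ∀ k, ⟪ρ k (ρ x v), ρ x v⟫ = φ (x⁻¹ * k * x) := fun k => by
    have hk : ρ k (ρ x v) = ρ x (ρ (x⁻¹ * k * x) v) := by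
      simp only [← Function.comp_apply (f := ρ _), ← LinearIsometryEquiv.coe_mul, ← map_mul]
      group
    rw [hk, (ρ x).inner_map_map, hφ]
  have hexp : ∀ k, exp (-α * M.d k 1) ≤
      exp (2 * α * M.d x 1) * exp (-α * M.d (x⁻¹ * k * x) 1) := fun k => by
    rw [← exp_add]
    exact exp_le_exp.2 (by nlinarith [mul_le_mul_of_nonneg_left (M.d_conj_le x k) hα])
  rw [inner_opOf_apply]
  calc ∑ k ∈ F.support, F k * ⟪ρ k (ρ x v), ρ x v⟫
      ≤ ∑ k ∈ F.support, B * exp (2 * α * M.d x 1) *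
          (exp (-α * M.d (x⁻¹ * k * x) 1) * φ (x⁻¹ * k * x)) := sum_le_sum fun k _ => by
        rw [hconj]
        calc F k * φ (x⁻¹ * k * x) ≤ B * exp (-α * M.d k 1) * φ (x⁻¹ * k * x) :=
              mul_le_mul_of_nonneg_right (hF k) (hpos _)
          _ ≤ B * (exp (2 * α * M.d x 1) * exp (-α * M.d (x⁻¹ * k * x) 1)) * φ (x⁻¹ * k * x) := by
              gcongr
              · exact hpos _
              · exact hexp k
          _ = _ := by ring
    _ = B * exp (2 * α * M.d x 1) *
          ∑ j ∈ F.support.image (fun k => x⁻¹ * k * x), exp (-α * M.d j 1) * φ j := by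
        rw [mul_sum, sum_image fun a _ b _ hab => by simpa using hab]
    _ ≤ _ := by
        gcongr
        exact hsum.sum_le_tsum _ fun g _ => mul_nonneg (exp_pos _).le (hpos g)

/-- The diagonal coefficients `⟪ρ(f)^n ρ(x)v, ρ(x)v⟫` are `O(R ^ n)` by summability of
`e^{-α|·|} φ`, so every vector of the cyclic span has orbit growth rate at most `R`. -/
theorem norm_opOf_le (hcyc : Dense (Submodule.span ℝ (Set.range fun g => ρ g v) : Set H))
    (hφ : ∀ g, φ g = ⟪ρ g v, v⟫) (hpos : ∀ g, 0 ≤ φ g) {α R : ℝ} (hα : 0 ≤ α) (hR : 0 < R)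
    (hsum : Summable fun g => exp (-α * M.d g 1) * φ g) {f : Γ →₀ ℝ} (hf : ∀ g, f g⁻¹ = f g)
    (hpow : ∀ n k, (MonoidAlgebra.ofCoeff f ^ n).coeff k ≤ R ^ n * exp (-α * M.d k 1)) :
    ‖opOf ρ f‖ ≤ R := by
  set T : H →ₗ[ℝ] H := ↑(opOf ρ f)
  have hT : T.IsSymmetric := isSymmetric_opOf ρ hf
  have hTpow : ∀ n, T ^ n = (opOf ρ (MonoidAlgebra.ofCoeff f ^ n).coeff : H →ₗ[ℝ] H) := fun n => by
    rw [opOf_coeff_pow]; exact (map_pow ContinuousLinearMap.toLinearMapRingHom _ n).symm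
  have hA : 0 ≤ ∑' g, exp (-α * M.d g 1) * φ g :=
    tsum_nonneg fun g => mul_nonneg (exp_pos _).le (hpos g)
  have hgen : Submodule.span ℝ (Set.range fun g => ρ g v) ≤ T.orbitGrowthSubmodule R := by
    rw [Submodule.span_le]
    rintro _ ⟨x, rfl⟩
    refine ⟨sqrt (exp (2 * α * M.d x 1) * ∑' g, exp (-α * M.d g 1) * φ g), fun n => ?_⟩
    refine le_of_pow_le_pow_left₀ two_ne_zero (by positivity) ?_
    rw [hT.norm_pow_apply_sq, mul_pow, sq_sqrt (by positivity), ← pow_mul, mul_comm n 2, hTpow,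
      RCLike.re_to_real]
    exact (inner_opOf_apply_translate_le ρ hφ hpos hα (by positivity) hsum _ (hpow (2 * n)) x
      ).trans_eq (by ring)
  exact (opOf ρ f).opNorm_le_of_dense hcyc hR.le fun u hu =>
    hT.norm_apply_le_of_mem_orbitGrowthSubmodule hR (hgen hu)

end Representation

theorem critExp_mono_of_weak_containment_general (M : InvMetric Γ)
    (hhyp : IsStronglyHyperbolic M) (hrg : IsRoughlyGeodesic M)
    (hne : 0 < growthExp M)
    {H₁ : Type*} [NormedAddCommGroup H₁] [InnerProductSpace ℝ H₁]
    {H₂ : Type*} [NormedAddCommGroup H₂] [InnerProductSpace ℝ H₂]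
    (π₁ : Γ →* (H₁ ≃ₗᵢ[ℝ] H₁)) (v₁ : H₁) (hv₁ : ‖v₁‖ = 1)
    (π₂ : Γ →* (H₂ ≃ₗᵢ[ℝ] H₂)) (v₂ : H₂)
    (hcyc₂ : Dense ((Submodule.span ℝ (Set.range fun g : Γ => π₂ g v₂) : Submodule ℝ H₂) : Set H₂))
    (φ₁ φ₂ : Γ → ℝ)
    (hφ₁ : ∀ g, φ₁ g = ⟪π₁ g v₁, v₁⟫) (hpos₁ : ∀ g, 0 ≤ φ₁ g)
    (hφ₂ : ∀ g, φ₂ g = ⟪π₂ g v₂, v₂⟫) (hpos₂ : ∀ g, 0 ≤ φ₂ g)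
    (hge₂ : growthExp M / 2 ≤ critExp M φ₂)
    (hweak : ∀ f : Γ →₀ ℝ, ‖opOf π₁ f‖ ≤ ‖opOf π₂ f‖) :
    critExp M φ₁ ≤ critExp M φ₂ := by
  refine le_of_forall_pos_lt_add fun ε hε => ?_
  obtain ⟨t, hct, htε, hsum₂⟩ :=
    exists_summable_of_critExp_lt (by linarith) (lt_add_of_pos_right _ (half_pos hε))
  set β := t + ε / 2 with hβ
  obtain ⟨C, hC⟩ := M.exists_card_ball_le hne (lt_add_of_pos_right _ (by positivity : 0 < ε / 4))
  obtain ⟨R, hR, hconv⟩ := exists_sum_exp_mul_exp_le hhyp.isHyperbolic hrg hC (α := t) (β := β)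
    (by linarith) (by linarith) (by linarith)
  have hnorm : ∀ r, ‖opOf π₂ (M.ballWeight β r)‖ ≤ R := fun r =>
    norm_opOf_le π₂ hcyc₂ hφ₂ hpos₂ (by linarith) hR hsum₂ (ballWeight_inv β r)
      (coeff_pow_le_of_sum_exp_mul_exp_le hR.le hconv (ballWeight_nonneg β r) (ballWeight_le β r))
  have hpartial : ∀ r, ∑ g ∈ M.ball r, exp (-β * M.d g 1) * φ₁ g ≤ R := fun r => by
    rw [← inner_opOf_ballWeight π₁ hφ₁]
    calc ⟪opOf π₁ (M.ballWeight β r) v₁, v₁⟫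
        ≤ ‖opOf π₁ (M.ballWeight β r) v₁‖ * ‖v₁‖ := real_inner_le_norm _ _
      _ ≤ ‖opOf π₁ (M.ballWeight β r)‖ := by simpa [hv₁] using (opOf π₁ _).le_opNorm v₁
      _ ≤ R := (hweak _).trans (hnorm r)
  have hsum₁ := summable_of_sum_ball_le (fun g => mul_nonneg (exp_pos _).le (hpos₁ g)) hpartial
  linarith [critExp_le_of_summable (by linarith) hsum₁]

/-- On a hyperbolic group, for pointwise nonnegative positive definite
functions `φ₁, φ₂` with critical exponents at least `δ/2`, weak containment of the
GNS representations (`‖π₁(f)‖ ≤ ‖π₂(f)‖` for all `f ∈ ℝ[Γ]`) forces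
`δ(φ₁) ≤ δ(φ₂)`. -/
theorem critExp_mono_of_weak_containment [Group.FG Γ] (M : InvMetric Γ)
    (hhyp : IsStronglyHyperbolic M) (hrg : IsRoughlyGeodesic M)
    (hne : 0 < growthExp M)
    {H₁ : Type*} [NormedAddCommGroup H₁] [InnerProductSpace ℝ H₁] [CompleteSpace H₁]
    {H₂ : Type*} [NormedAddCommGroup H₂] [InnerProductSpace ℝ H₂] [CompleteSpace H₂]
    (π₁ : Γ →* (H₁ ≃ₗᵢ[ℝ] H₁)) (v₁ : H₁) (hv₁ : ‖v₁‖ = 1)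
    (hcyc₁ : Dense ((Submodule.span ℝ (Set.range fun g : Γ => π₁ g v₁) : Submodule ℝ H₁) : Set H₁))
    (π₂ : Γ →* (H₂ ≃ₗᵢ[ℝ] H₂)) (v₂ : H₂) (hv₂ : ‖v₂‖ = 1)
    (hcyc₂ : Dense ((Submodule.span ℝ (Set.range fun g : Γ => π₂ g v₂) : Submodule ℝ H₂) : Set H₂))
    (φ₁ φ₂ : Γ → ℝ)
    (hφ₁ : ∀ g, φ₁ g = ⟪π₁ g v₁, v₁⟫) (hpos₁ : ∀ g, 0 ≤ φ₁ g)
    (hφ₂ : ∀ g, φ₂ g = ⟪π₂ g v₂, v₂⟫) (hpos₂ : ∀ g, 0 ≤ φ₂ g)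
    (hge₁ : growthExp M / 2 ≤ critExp M φ₁) (hge₂ : growthExp M / 2 ≤ critExp M φ₂)
    (hweak : ∀ f : Γ →₀ ℝ, ‖opOf π₁ f‖ ≤ ‖opOf π₂ f‖) :
    critExp M φ₁ ≤ critExp M φ₂ :=
  critExp_mono_of_weak_containment_general M hhyp hrg hne π₁ v₁ hv₁ π₂ v₂ hcyc₂ φ₁ φ₂ hφ₁ hpos₁ hφ₂
    hpos₂ hge₂ hweak
end
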